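/- arXiv:0804.3074 — 2 statements merged into one kernel-verified Lean document; each statement's English description precedes it below -/
import Mathlib

section
/- For integers 0 ≤ k ≤ n, the (q,t)-binomial coefficient satisfies the second Pascal-type relation: [n choose k]_{q,t} = t^{q^n - q^k} · [n-1 choose k-1]_{q,t^q} + (k!_{q,t^q} / k!_{q,t}) · [n-1 choose k]_{q,t^q}. -/
noncomputable section

/-- The (q,t)-factorial `k!_{q,t} = ∏_{i=0}^{k-1} (1 - t^{q^k - q^i})`, as a function of
`t` in the field of rational functions `ℚ(t)`. -/
def qtfact (q k : ℕ) (t : RatFunc ℚ) : RatFunc ℚ :=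
  ∏ i ∈ Finset.range k, (1 - t ^ (q ^ k - q ^ i))

/-- The (q,t)-binomial coefficient `[n choose k]_{q,t} = n!_{q,t}/(k!_{q,t} · (n-k)!_{q,t^{q^k}})`,
with the convention that it vanishes outside the range `0 ≤ k ≤ n`. -/
def qtbinom (q n : ℕ) (k : ℤ) (t : RatFunc ℚ) : RatFunc ℚ :=
  if 0 ≤ k ∧ k ≤ (n : ℤ) then
    qtfact q n t / (qtfact q k.toNat t * qtfact q (n - k.toNat) (t ^ q ^ k.toNat))
  else 0

/-! Unfolding the binomials, the recursion `(k+1)!_{q,t} = (1 - t^{q^{k+1}-1}) · k!_{q,t^q}`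
applied to `n!_{q,t}`, `k!_{q,t}` and `(n-k)!_{q,t^{q^k}}` leaves a common factor times the identity
`1 - t^{a+c} = t^a (1 - t^c) + (1 - t^a)`, where `a = q^n - q^k` and `c = q^k - 1`. Every factorial
that gets cancelled is nonzero because `X` is not a root of unity. -/

theorem RatFunc.not_isOfFinOrder_X {K : Type*} [Field K] :
    ¬IsOfFinOrder (RatFunc.X : RatFunc K) := by
  intro h
  obtain ⟨n, hn, hXn⟩ := isOfFinOrder_iff_pow_eq_one.1 h
  have hdeg := congrArg RatFunc.intDegree hXn
  rw [← RatFunc.algebraMap_X, ← map_pow, RatFunc.intDegree_polynomial] at hdeg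
  simp at hdeg
  omega

theorem pow_ne_one_of_not_isOfFinOrder {M : Type*} [Monoid M] {x : M} (hx : ¬IsOfFinOrder x)
    {n : ℕ} (hn : n ≠ 0) : x ^ n ≠ 1 :=
  fun h => hx (isOfFinOrder_iff_pow_eq_one.2 ⟨n, Nat.pos_of_ne_zero hn, h⟩)

@[simp]
theorem qtfact_zero (q : ℕ) (t : RatFunc ℚ) : qtfact q 0 t = 1 := by
  simp [qtfact]

theorem qtfact_succ (q n : ℕ) (t : RatFunc ℚ) :
    qtfact q (n + 1) t = (1 - t ^ (q ^ (n + 1) - 1)) * qtfact q n (t ^ q) := by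
  rw [qtfact, Finset.prod_range_succ', qtfact, pow_zero, mul_comm]
  congr 1
  refine Finset.prod_congr rfl fun i _ => ?_
  rw [← pow_mul, Nat.mul_sub, ← pow_succ', ← pow_succ']

section

variable {q : ℕ} {t : RatFunc ℚ}

theorem qtfact_ne_zero (hq : 1 < q) (ht : ¬IsOfFinOrder t) (k : ℕ) : qtfact q k t ≠ 0 := by
  refine Finset.prod_ne_zero_iff.2 fun i hi => sub_ne_zero.2 (Ne.symm ?_)
  have : q ^ i < q ^ k := Nat.pow_lt_pow_right hq (Finset.mem_range.1 hi)
  exact pow_ne_one_of_not_isOfFinOrder ht (by omega)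

theorem qtbinom_natCast {n k : ℕ} (hk : k ≤ n) (t : RatFunc ℚ) :
    qtbinom q n k t = qtfact q n t / (qtfact q k t * qtfact q (n - k) (t ^ q ^ k)) := by
  rw [qtbinom, if_pos ⟨by positivity, by exact_mod_cast hk⟩, Int.toNat_natCast]

theorem qtbinom_of_neg {n : ℕ} {k : ℤ} (hk : k < 0) (t : RatFunc ℚ) : qtbinom q n k t = 0 :=
  if_neg fun h => by omega

theorem qtbinom_of_lt {n : ℕ} {k : ℤ} (hk : n < k) (t : RatFunc ℚ) : qtbinom q n k t = 0 :=
  if_neg fun h => by omega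

theorem qtbinom_zero_right (hq : 1 < q) (ht : ¬IsOfFinOrder t) (n : ℕ) :
    qtbinom q n 0 t = 1 := by
  rw [← Nat.cast_zero, qtbinom_natCast n.zero_le]
  simpa using div_self (qtfact_ne_zero hq ht n)

theorem qtbinom_self (hq : 1 < q) (ht : ¬IsOfFinOrder t) (n : ℕ) : qtbinom q n n t = 1 := by
  rw [qtbinom_natCast le_rfl]
  simpa using div_self (qtfact_ne_zero hq ht n)

theorem qtbinom_succ_succ (hq : 1 < q) (ht : ¬IsOfFinOrder t) {m j : ℕ} (hjm : j < m) :
    qtbinom q (m + 1) (j + 1 : ℕ) t =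
      t ^ (q ^ (m + 1) - q ^ (j + 1)) * qtbinom q m j (t ^ q) +
        qtfact q (j + 1) (t ^ q) / qtfact q (j + 1) t * qtbinom q m (j + 1 : ℕ) (t ^ q) := by
  have htq : ¬IsOfFinOrder (t ^ q) := fun h => ht (h.of_pow (by omega))
  have htqj : ¬IsOfFinOrder (t ^ q ^ (j + 2)) := fun h => ht (h.of_pow (by positivity))
  have hpow_lt : q ^ (j + 1) < q ^ (m + 1) := Nat.pow_lt_pow_right hq (by omega)
  have hone_lt_pow : 1 < q ^ (j + 1) := Nat.one_lt_pow (by omega) hq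
  set a := q ^ (m + 1) - q ^ (j + 1)
  set c := q ^ (j + 1) - 1 with hc_def
  have hfact_tail : qtfact q (m - j) (t ^ q ^ (j + 1)) =
      (1 - t ^ a) * qtfact q (m - j - 1) (t ^ q ^ (j + 2)) := by
    obtain ⟨l, hl⟩ : ∃ l, m - j = l + 1 := ⟨m - j - 1, by omega⟩
    have hexp : q ^ (j + 1) * (q ^ (l + 1) - 1) = a := by
      rw [Nat.mul_sub, mul_one, ← pow_add]
      congr 2
      omega
    rw [hl, qtfact_succ, ← pow_mul, ← pow_mul, hexp, ← pow_succ, Nat.add_sub_cancel]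
  have hsplit : q ^ (m + 1) - 1 = a + c := by omega
  rw [qtbinom_natCast (by omega), qtbinom_natCast (by omega), qtbinom_natCast (by omega),
    qtfact_succ q m, qtfact_succ q j, hsplit, ← hc_def, ← pow_mul, ← pow_mul, ← pow_succ',
    ← pow_succ',
    Nat.add_sub_add_right, show m - (j + 1) = m - j - 1 by omega, hfact_tail]
  have ha : (1 : RatFunc ℚ) - t ^ a ≠ 0 :=
    sub_ne_zero.2 (pow_ne_one_of_not_isOfFinOrder ht (by omega)).symm
  have hc : (1 : RatFunc ℚ) - t ^ c ≠ 0 :=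
    sub_ne_zero.2 (pow_ne_one_of_not_isOfFinOrder ht (by omega)).symm
  have := qtfact_ne_zero hq htq j
  have := qtfact_ne_zero hq htq (j + 1)
  have := qtfact_ne_zero hq htqj (m - j - 1)
  field_simp
  ring

end

/-- Second (q,t)-Pascal relation:
`[n choose k]_{q,t} = t^{q^n-q^k} · [n-1 choose k-1]_{q,t^q} + (k!_{q,t^q}/k!_{q,t}) · [n-1 choose k]_{q,t^q}`. -/
theorem qt_pascal_second (q n k : ℕ) (hq : 2 ≤ q) (hk : k ≤ n) :
    qtbinom q n (k : ℤ) RatFunc.X =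
      RatFunc.X ^ (q ^ n - q ^ k) * qtbinom q (n - 1) ((k : ℤ) - 1) (RatFunc.X ^ q) +
        (qtfact q k (RatFunc.X ^ q) / qtfact q k RatFunc.X) *
          qtbinom q (n - 1) (k : ℤ) (RatFunc.X ^ q) := by
  have hX := RatFunc.not_isOfFinOrder_X (K := ℚ)
  have hXq : ¬IsOfFinOrder (RatFunc.X ^ q : RatFunc ℚ) := fun h => hX (h.of_pow (by omega))
  rcases Nat.eq_zero_or_pos k with rfl | hk0
  · rw [Nat.cast_zero, zero_sub, qtbinom_of_neg neg_one_lt_zero, qtbinom_zero_right hq hX,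
      qtbinom_zero_right hq hXq]
    simp
  rcases hk.eq_or_lt with rfl | hkn
  · obtain ⟨j, rfl⟩ : ∃ j, k = j + 1 := ⟨k - 1, by omega⟩
    rw [qtbinom_self hq hX, Nat.add_sub_cancel, Nat.cast_succ, add_sub_cancel_right,
      qtbinom_self hq hXq, qtbinom_of_lt (by omega)]
    simp
  obtain ⟨m, rfl⟩ : ∃ m, n = m + 1 := ⟨n - 1, by omega⟩
  obtain ⟨j, rfl⟩ : ∃ j, k = j + 1 := ⟨k - 1, by omega⟩
  rw [qtbinom_succ_succ hq hX (by omega), Nat.add_sub_cancel, Nat.cast_succ,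
    add_sub_cancel_right, ← Nat.cast_succ]
end
end

section
/- For integers n ≥ r ≥ 0 and q ≥ 2, the principal specialization of Macdonald's elementary analogue satisfies E_r(1, t, ..., t^{n-1}) = [n choose n-r]_{q,t} · ∏_{i=1}^{r} (t^{q^n} - t^{q^{n-r+i-1}})/(t^{q^{n-r+i}} - t^{q^{n-r}}). -/
/-!
Reversing the columns multiplies both bialternants by the same sign and turns them into
Vandermonde determinants in the points `x_k = t^{q^k}`: the denominator in `x_0, …, x_{n-1}`, the
numerator in `x_0, …, x_n` with `x_{n-r}` omitted. Omitting the point `x_s` from the Vandermonde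
determinant of `x_0, …, x_n` divides it by `∏_{i<s} (x_s - x_i) · ∏_{j>s} (x_j - x_s)`, so the
quotient is a ratio of two such products, which regroups into the stated factors.
-/

open Finset Matrix

namespace Matrix

variable {R : Type*} [CommRing R]

theorem det_vandermonde_eq_prod_ite {n : ℕ} (v : Fin n → R) :
    det (vandermonde v) = ∏ i, ∏ j, if i < j then v j - v i else 1 := by
  simp only [det_vandermonde, ← prod_filter, filter_lt_eq_Ioi]

theorem det_vandermonde_eq_det_vandermonde_succAbove_mul {n : ℕ} (v : Fin (n + 1) → R)
    (s : Fin (n + 1)) :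
    det (vandermonde v) = det (vandermonde (v ∘ s.succAbove)) *
      ((∏ i ∈ Iio s, (v s - v i)) * ∏ j ∈ Ioi s, (v j - v s)) := by
  -- Over all ordered pairs, `Fin.prod_univ_succAbove` splits off row `s` and column `s` at once.
  set g : Fin (n + 1) → Fin (n + 1) → R := fun i j => if i < j then v j - v i else 1 with hg
  have row : ∏ j, g s j = ∏ j ∈ Ioi s, (v j - v s) := by
    rw [hg, ← prod_filter, filter_lt_eq_Ioi]
  have col : ∏ i, g (s.succAbove i) s = ∏ i ∈ Iio s, (v s - v i) := by
    rw [← one_mul (∏ i, g (s.succAbove i) s), show 1 = g s s by simp [hg],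
      ← Fin.prod_univ_succAbove (g · s) s, hg, ← prod_filter, filter_gt_eq_Iio]
  calc det (vandermonde v)
      = (∏ j, g s j) * ∏ i, (g (s.succAbove i) s * ∏ j, g (s.succAbove i) (s.succAbove j)) := by
        rw [det_vandermonde_eq_prod_ite, Fin.prod_univ_succAbove _ s]
        congr 1
        exact prod_congr rfl fun i _ => Fin.prod_univ_succAbove _ s
    _ = det (vandermonde (v ∘ s.succAbove)) *
      ((∏ i ∈ Iio s, (v s - v i)) * ∏ j ∈ Ioi s, (v j - v s)) := by
        rw [prod_mul_distrib, row, col, det_vandermonde_eq_prod_ite]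
        simp only [hg, Fin.succAbove_lt_succAbove_iff, Function.comp_apply]
        ring

theorem det_vandermonde_comp_perm {n : ℕ} (v : Fin n → R) (σ : Equiv.Perm (Fin n)) :
    det (vandermonde (v ∘ σ)) = Equiv.Perm.sign σ * det (vandermonde v) :=
  det_permute σ (vandermonde v)

theorem det_of_pow_mul {n : ℕ} (a : R) (e : Fin n → ℕ) :
    det (of fun i j : Fin n => a ^ ((i : ℕ) * e j)) = det (vandermonde fun j => a ^ e j) := by
  rw [← det_transpose]
  congr 1
  ext i j
  rw [transpose_apply, vandermonde_apply, of_apply, ← pow_mul, mul_comm]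

theorem det_vandermonde_succAbove_div_det_vandermonde_succAbove {K : Type*} [Field K] {n : ℕ}
    {v : Fin (n + 1) → K} (hv : Function.Injective v) (s t : Fin (n + 1)) :
    det (vandermonde (v ∘ s.succAbove)) / det (vandermonde (v ∘ t.succAbove)) =
      ((∏ i ∈ Iio t, (v t - v i)) * ∏ j ∈ Ioi t, (v j - v t)) /
        ((∏ i ∈ Iio s, (v s - v i)) * ∏ j ∈ Ioi s, (v j - v s)) := by
  have hs := det_vandermonde_eq_det_vandermonde_succAbove_mul v s
  have ht := det_vandermonde_eq_det_vandermonde_succAbove_mul v t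
  have hne := det_vandermonde_ne_zero_iff.2 hv
  rw [div_eq_div_iff (left_ne_zero_of_mul (ht ▸ hne)) (right_ne_zero_of_mul (hs ▸ hne)), ← hs,
    mul_comm, ← ht]

end Matrix

theorem Fin.prod_Iio_val {M : Type*} [CommMonoid M] {m : ℕ} (f : ℕ → M) (a : Fin m) :
    ∏ i ∈ Iio a, f i = ∏ i ∈ range a, f i := by
  rw [← Nat.Iio_eq_range, ← Fin.map_valEmbedding_Iio, prod_map]
  rfl

theorem Fin.prod_Ioi_val {M : Type*} [CommMonoid M] {m : ℕ} (f : ℕ → M) (a : Fin m) :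
    ∏ i ∈ Ioi a, f i = ∏ i ∈ range (m - (a + 1)), f (a + 1 + i) := by
  rw [← prod_Ico_eq_prod_range, Finset.Ico_add_one_left_eq_Ioo, ← Fin.map_valEmbedding_Ioi,
    prod_map]
  rfl

theorem Fin.val_succAbove {n : ℕ} (p : Fin (n + 1)) (i : Fin n) :
    (p.succAbove i : ℕ) = if (i : ℕ) < p then (i : ℕ) else i + 1 := by
  unfold Fin.succAbove
  split_ifs <;> simp_all [Fin.lt_def]

theorem Fin.val_succAbove_rev {n : ℕ} (p : Fin (n + 1)) (j : Fin n) :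
    (p.succAbove j.rev : ℕ) = (if (j : ℕ) < n - p then 1 else 0) + (n - 1 - j) := by
  rw [Fin.val_succAbove, Fin.val_rev]
  split_ifs <;> omega

theorem RatFunc.X_pow_injective (K : Type*) [Field K] :
    Function.Injective fun k : ℕ => (RatFunc.X : RatFunc K) ^ k := by
  intro a b h
  have := congrArg RatFunc.intDegree h
  simpa [← RatFunc.algebraMap_X, ← map_pow, RatFunc.intDegree_polynomial] using this

theorem det_vandermonde_succAbove_div_det_vandermonde_last {K : Type*} [Field K] {x : ℕ → K}
    (hx : Function.Injective x) (s r : ℕ) :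
    det (vandermonde ((fun k : Fin (s + r + 1) => x k) ∘ (Fin.mk s (by omega)).succAbove)) /
      det (vandermonde ((fun k : Fin (s + r + 1) => x k) ∘ (Fin.last _).succAbove)) =
      (∏ i ∈ range s, (x (s + r) - x i) / (x s - x i)) *
        ∏ i ∈ range r, (x (s + r) - x (s + i)) / (x (s + i + 1) - x s) := by
  rw [det_vandermonde_succAbove_div_det_vandermonde_succAbove
    (v := fun k : Fin (s + r + 1) => x k) (hx.comp Fin.val_injective)]
  simp only [Fin.val_last]
  rw [Fin.prod_Iio_val (fun i => x (s + r) - x i), Fin.prod_Ioi_val (fun j => x j - x (s + r)),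
    Fin.prod_Iio_val (fun i => x s - x i), Fin.prod_Ioi_val (fun j => x j - x s)]
  simp only [Fin.val_last, Nat.sub_self, range_zero, prod_empty, mul_one,
    show s + r + 1 - (s + 1) = r by omega, prod_range_add, prod_div_distrib, div_mul_div_comm,
    add_right_comm s 1]

theorem pow_sub_pow_div_pow_sub_pow {K : Type*} [Field K] {a : K} (ha : a ≠ 0) {k l m : ℕ}
    (hkl : k ≤ l) (hkm : k ≤ m) :
    (a ^ m - a ^ k) / (a ^ l - a ^ k) = (1 - a ^ (m - k)) / (1 - a ^ (l - k)) := by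
  obtain ⟨l, rfl⟩ := Nat.exists_eq_add_of_le hkl
  obtain ⟨m, rfl⟩ := Nat.exists_eq_add_of_le hkm
  rw [Nat.add_sub_cancel_left, Nat.add_sub_cancel_left, ← neg_div_neg_eq, pow_add, pow_add]
  rw [show -(a ^ k * a ^ m - a ^ k) = a ^ k * (1 - a ^ m) by ring,
    show -(a ^ k * a ^ l - a ^ k) = a ^ k * (1 - a ^ l) by ring,
    mul_div_mul_left _ _ (pow_ne_zero k ha)]

/-- For integers `n ≥ r ≥ 0` and `q ≥ 2`, the principal specialization of Macdonald's
elementary analogue `E_r = S_{(1^r)}` satisfies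
`E_r(1, t, …, t^{n-1}) = [n choose n-r]_{q,t} · ∏_{i=1}^{r} (t^{q^n} - t^{q^{n-r+i-1}})/(t^{q^{n-r+i}} - t^{q^{n-r}})`.
Here `E_r` is given by the bialternant with `λ = (1^r)`, so the exponent in column `j`
(0-indexed) is `q^{(if j < r then 1 else 0) + n - 1 - j}`. -/
theorem qt_elementary_principal_specialization (q n r : ℕ) (hq : 2 ≤ q) (hr : r ≤ n) :
    Matrix.det (Matrix.of fun i j : Fin n =>
        (RatFunc.X : RatFunc ℚ) ^
          ((i : ℕ) * q ^ ((if (j : ℕ) < r then 1 else 0) + (n - 1 - (j : ℕ)))))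
      / Matrix.det (Matrix.of fun i j : Fin n =>
        (RatFunc.X : RatFunc ℚ) ^ ((i : ℕ) * q ^ (n - 1 - (j : ℕ))))
      = (∏ i ∈ Finset.range (n - r),
          (1 - (RatFunc.X : RatFunc ℚ) ^ (q ^ n - q ^ i)) / (1 - RatFunc.X ^ (q ^ (n - r) - q ^ i)))
        * ∏ i ∈ Finset.range r,
            ((RatFunc.X : RatFunc ℚ) ^ (q ^ n) - RatFunc.X ^ (q ^ (n - r + i)))
              / (RatFunc.X ^ (q ^ (n - r + i + 1)) - RatFunc.X ^ (q ^ (n - r))) := by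
  obtain ⟨s, rfl⟩ := Nat.exists_eq_add_of_le' hr
  set x : ℕ → RatFunc ℚ := fun k => RatFunc.X ^ q ^ k with hx
  have hcols (p : Fin (s + r + 1)) : (fun j : Fin (s + r) => (RatFunc.X : RatFunc ℚ) ^
      q ^ ((if (j : ℕ) < s + r - p then 1 else 0) + (s + r - 1 - j))) =
      ((fun k : Fin (s + r + 1) => x k) ∘ p.succAbove) ∘ Fin.revPerm := by
    funext j
    simp only [hx, Function.comp_apply, Fin.revPerm_apply, Fin.val_succAbove_rev]
  have hnum := hcols ⟨s, by omega⟩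
  have hden := hcols (Fin.last _)
  simp only [Nat.add_sub_cancel_left, Fin.val_last, Nat.sub_self, Nat.not_lt_zero, if_false,
    zero_add] at hnum hden
  have hfactor : ∀ i ∈ range s, (1 - (RatFunc.X : RatFunc ℚ) ^ (q ^ (s + r) - q ^ i)) /
      (1 - RatFunc.X ^ (q ^ s - q ^ i)) = (x (s + r) - x i) / (x s - x i) := fun i hi =>
    have his : q ^ i ≤ q ^ s := Nat.pow_le_pow_right (by omega) (mem_range.1 hi).le
    (pow_sub_pow_div_pow_sub_pow RatFunc.X_ne_zero his
      (his.trans (Nat.pow_le_pow_right (by omega) (by omega)))).symm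
  rw [Nat.add_sub_cancel, det_of_pow_mul, det_of_pow_mul, hnum, hden, det_vandermonde_comp_perm,
    det_vandermonde_comp_perm, mul_div_mul_left _ _ (by simp),
    det_vandermonde_succAbove_div_det_vandermonde_last (x := x)
      ((RatFunc.X_pow_injective ℚ).comp (Nat.pow_right_injective hq)),
    prod_congr rfl hfactor]
end
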